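/- Let M be a smooth manifold with H¹(M,ℝ)=0, let ω be an exact 2-form on M (not necessarily nondegenerate), and let Diff(M,ω) be the group of diffeomorphisms of M preserving ω. Fix ω₁ with dω₁=ω and x₀∈M. Then C_{x₀}(g₁,g₂)=∫_{x₀}^{g₂x₀}(g₁*ω₁−ω₁) is a normalized 2-cocycle on Diff(M,ω) with values in the trivial module ℝ, and its cohomology class is independent of the choice of x₀ and of ω₁. -/

import Mathlib

/-! Since `g*ω = ω`, the form `θ_g = g*ω₁ - ω₁` is closed, hence exact by `H¹(M) = 0`, and its
line integrals are differences of values of a primitive, independent of the primitive because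
`M` is connected. The cocycle identity and both coboundary formulas then follow from the
crossed-homomorphism rule `θ_{g₁g₂} = g₂*θ_{g₁} + θ_{g₂}`, from `∫_x^y g*α = ∫_{gx}^{gy} α`, and
from additivity of `∫` in the endpoints. -/

open scoped BigOperators

namespace SymplCocycle

variable {M V : Type*} [AddCommGroup V] [Module ℝ V]

abbrev Form (M V : Type*) [AddCommGroup V] [Module ℝ V] (k : ℕ) :=
  M → V [⋀^Fin k]→ₗ[ℝ] ℝ

noncomputable def ofFun (f : M → ℝ) : Form M V 0 :=
  fun x => AlternatingMap.constOfIsEmpty ℝ V (Fin 0) (f x)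

noncomputable def wedgeAlt {p q : ℕ} (α : V [⋀^Fin p]→ₗ[ℝ] ℝ) (β : V [⋀^Fin q]→ₗ[ℝ] ℝ) :
    V [⋀^Fin (p + q)]→ₗ[ℝ] ℝ :=
  AlternatingMap.domDomCongr finSumFinEquiv
    ((LinearMap.mul' ℝ ℝ).compAlternatingMap (α.domCoprod β))

noncomputable def wedge {p q : ℕ} (α : Form M V p) (β : Form M V q) : Form M V (p + q) :=
  fun x => wedgeAlt (α x) (β x)

noncomputable def wpow (ω : Form M V 2) : (n : ℕ) → Form M V (2 * n)
  | 0 => ofFun fun _ => (1 : ℝ)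
  | n + 1 => wedge (wpow ω n) ω

def castF {k l : ℕ} (h : k = l) (α : Form M V k) : Form M V l := h ▸ α

noncomputable def iprod (ω : Form M V 2) (X : M → V) : Form M V 1 :=
  fun x => (ω x).curryLeft (X x)

/-- An abstract "differential calculus" on `M`, with all tangent spaces identified with `V`:
it records which functions/maps/forms/vector fields are smooth, the tangent maps of smooth
self-maps, the exterior derivative, and the Lie bracket of vector fields, together with their
standard properties.  The axiom `apply_eq_of_d_ofFun_eq_zero` encodes connectedness of `M`. -/
structure DiffCalc (M V : Type*) [AddCommGroup V] [Module ℝ V] where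
  SmoothFun : (M → ℝ) → Prop
  SmoothMap : (M → M) → Prop
  SmoothForm : ∀ {k : ℕ}, Form M V k → Prop
  SmoothVF : (M → V) → Prop
  Tmap : (M → M) → M → V →ₗ[ℝ] V
  d : ∀ {k : ℕ}, Form M V k → Form M V (k + 1)
  lieVF : (M → V) → (M → V) → (M → V)
  smoothMap_id : SmoothMap id
  smoothMap_comp : ∀ {f g : M → M}, SmoothMap f → SmoothMap g → SmoothMap (f ∘ g)
  smoothFun_comp : ∀ {f : M → ℝ} {g : M → M}, SmoothFun f → SmoothMap g → SmoothFun (f ∘ g)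
  smoothFun_const : ∀ c : ℝ, SmoothFun fun _ => c
  smoothForm_ofFun : ∀ {f : M → ℝ}, SmoothFun f → SmoothForm (ofFun f)
  smoothFun_of_ofFun : ∀ {f : M → ℝ}, SmoothForm (ofFun f) → SmoothFun f
  smoothForm_add : ∀ {k} {α β : Form M V k}, SmoothForm α → SmoothForm β → SmoothForm (α + β)
  smoothForm_neg : ∀ {k} {α : Form M V k}, SmoothForm α → SmoothForm (-α)
  smoothForm_wedge : ∀ {p q} {α : Form M V p} {β : Form M V q},
    SmoothForm α → SmoothForm β → SmoothForm (wedge α β)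
  smoothForm_d : ∀ {k} {α : Form M V k}, SmoothForm α → SmoothForm (d α)
  smoothForm_pull : ∀ {k} {α : Form M V k} {g : M → M}, SmoothMap g → SmoothForm α →
    SmoothForm fun x => (α (g x)).compLinearMap (Tmap g x)
  smoothVF_lie : ∀ {X Y : M → V}, SmoothVF X → SmoothVF Y → SmoothVF (lieVF X Y)
  lieVF_antisymm : ∀ X Y : M → V, lieVF X Y = -lieVF Y X
  Tmap_id : ∀ x : M, Tmap id x = LinearMap.id
  Tmap_comp : ∀ {f g : M → M} (x : M), SmoothMap f → SmoothMap g →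
    Tmap (f ∘ g) x = (Tmap f (g x)).comp (Tmap g x)
  d_add : ∀ {k} (α β : Form M V k), d (α + β) = d α + d β
  d_d : ∀ {k} (α : Form M V k), SmoothForm α → d (d α) = 0
  d_pull : ∀ {k} {g : M → M} (α : Form M V k), SmoothMap g → SmoothForm α →
    d (fun x => (α (g x)).compLinearMap (Tmap g x)) =
      fun x => (d α (g x)).compLinearMap (Tmap g x)
  apply_eq_of_d_ofFun_eq_zero : ∀ {f : M → ℝ}, SmoothFun f → d (ofFun f) = 0 →
    ∀ x y : M, f x = f y

/-- Pullback of a `k`-form along a (smooth) map. -/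
def DiffCalc.pull (F : DiffCalc M V) {k : ℕ} (g : M → M) (α : Form M V k) : Form M V k :=
  fun x => (α (g x)).compLinearMap (F.Tmap g x)

/-- The symplectomorphisms (diffeomorphisms preserving the `2`-form `ω`) of `M`. -/
def DiffCalc.IsSymplecto (F : DiffCalc M V) (ω : Form M V 2) (g : Equiv.Perm M) : Prop :=
  F.SmoothMap g ∧ F.SmoothMap g.symm ∧ F.pull g ω = ω

/-- Pointwise nondegeneracy of a `2`-form. -/
def Nondegenerate (ω : Form M V 2) : Prop :=
  ∀ x : M, ∀ u : V, u ≠ 0 → ∃ v : V, ω x ![u, v] ≠ 0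

/-- A `2`-form is symplectic if it is smooth, closed and nondegenerate. -/
def DiffCalc.IsSymplectic (F : DiffCalc M V) (ω : Form M V 2) : Prop :=
  F.SmoothForm ω ∧ F.d ω = 0 ∧ Nondegenerate ω

/-- `X` is a locally Hamiltonian vector field: `i_X ω` is closed. -/
def DiffCalc.IsLocHam (F : DiffCalc M V) (ω : Form M V 2) (X : M → V) : Prop :=
  F.SmoothVF X ∧ F.SmoothForm (iprod ω X) ∧ F.d (iprod ω X) = 0

/-- `X` is a Hamiltonian vector field: `i_X ω` is exact. -/
def DiffCalc.IsHam (F : DiffCalc M V) (ω : Form M V 2) (X : M → V) : Prop :=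
  F.SmoothVF X ∧ F.SmoothForm (iprod ω X) ∧
    ∃ f : M → ℝ, F.SmoothFun f ∧ F.d (ofFun f) = iprod ω X

/-- `H¹(M,ℝ) = 0`: every closed smooth `1`-form is the differential of a smooth function. -/
def DiffCalc.H1Trivial (F : DiffCalc M V) : Prop :=
  ∀ α : Form M V 1, F.SmoothForm α → F.d α = 0 →
    ∃ f : M → ℝ, F.SmoothFun f ∧ F.d (ofFun f) = α

variable {F : DiffCalc M V}

theorem ofFun_add (f g : M → ℝ) : (ofFun (f + g) : Form M V 0) = ofFun f + ofFun g := by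
  funext x; ext v; simp [ofFun]

theorem ofFun_sub (f g : M → ℝ) : (ofFun (f - g) : Form M V 0) = ofFun f - ofFun g := by
  funext x; ext v; simp [ofFun]

theorem ofFun_zero : (ofFun (0 : M → ℝ) : Form M V 0) = 0 := by
  funext x; ext v; simp [ofFun]

namespace DiffCalc

variable (F) in
theorem d_zero {k : ℕ} : F.d (0 : Form M V k) = 0 := by
  simpa using F.d_add (0 : Form M V k) 0

variable (F) in
theorem d_sub {k : ℕ} (α β : Form M V k) : F.d (α - β) = F.d α - F.d β := by
  rw [eq_sub_iff_add_eq, ← F.d_add, sub_add_cancel]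

theorem smoothForm_sub {k : ℕ} {α β : Form M V k} (hα : F.SmoothForm α) (hβ : F.SmoothForm β) :
    F.SmoothForm (α - β) := by
  rw [sub_eq_add_neg]
  exact F.smoothForm_add hα (F.smoothForm_neg hβ)

theorem smoothFun_add {f g : M → ℝ} (hf : F.SmoothFun f) (hg : F.SmoothFun g) :
    F.SmoothFun (f + g) :=
  F.smoothFun_of_ofFun (V := V) <| by
    rw [ofFun_add]; exact F.smoothForm_add (F.smoothForm_ofFun hf) (F.smoothForm_ofFun hg)

theorem smoothFun_sub {f g : M → ℝ} (hf : F.SmoothFun f) (hg : F.SmoothFun g) :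
    F.SmoothFun (f - g) :=
  F.smoothFun_of_ofFun (V := V) <| by
    rw [ofFun_sub]; exact smoothForm_sub (F.smoothForm_ofFun hf) (F.smoothForm_ofFun hg)

variable (F) in
theorem pull_ofFun (g : M → M) (f : M → ℝ) : F.pull g (ofFun f) = ofFun (f ∘ g) := by
  funext x; ext v; simp [pull, ofFun]

variable (F) in
theorem pull_sub {k : ℕ} (g : M → M) (α β : Form M V k) :
    F.pull g (α - β) = F.pull g α - F.pull g β := by
  funext x; ext v; simp [pull]

variable (F) in
theorem pull_id {k : ℕ} (α : Form M V k) : F.pull id α = α := by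
  funext x; ext v; simp [pull, F.Tmap_id]

theorem pull_comp {k : ℕ} {f g : M → M} (hf : F.SmoothMap f) (hg : F.SmoothMap g)
    (α : Form M V k) : F.pull (f ∘ g) α = F.pull g (F.pull f α) := by
  funext x; ext v; simp [pull, F.Tmap_comp x hf hg]

theorem d_pull_eq {k : ℕ} {g : M → M} {α : Form M V k} (hg : F.SmoothMap g)
    (hα : F.SmoothForm α) : F.d (F.pull g α) = F.pull g (F.d α) :=
  F.d_pull α hg hα

theorem isSymplecto_one (ω : Form M V 2) : F.IsSymplecto ω 1 :=
  ⟨F.smoothMap_id, F.smoothMap_id, F.pull_id ω⟩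

theorem IsSymplecto.mul {ω : Form M V 2} {g₁ g₂ : Equiv.Perm M}
    (h₁ : F.IsSymplecto ω g₁) (h₂ : F.IsSymplecto ω g₂) : F.IsSymplecto ω (g₁ * g₂) := by
  refine ⟨?_, show F.SmoothMap (g₂.symm ∘ g₁.symm) from F.smoothMap_comp h₂.2.1 h₁.2.1, ?_⟩ <;>
    rw [Equiv.Perm.coe_mul]
  · exact F.smoothMap_comp h₁.1 h₂.1
  · rw [pull_comp h₁.1 h₂.1, h₁.2.2, h₂.2.2]

variable (F) in
def IsPrimitive (α : Form M V 1) (f : M → ℝ) : Prop :=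
  F.SmoothFun f ∧ F.d (ofFun f) = α

variable (F) in
def IsExact (α : Form M V 1) : Prop :=
  ∃ f, F.IsPrimitive α f

variable {α β : Form M V 1} {f g : M → ℝ}

theorem isPrimitive_zero : F.IsPrimitive 0 0 :=
  ⟨F.smoothFun_const 0, by rw [ofFun_zero, d_zero]⟩

theorem IsPrimitive.add (hf : F.IsPrimitive α f) (hg : F.IsPrimitive β g) :
    F.IsPrimitive (α + β) (f + g) :=
  ⟨smoothFun_add hf.1 hg.1, by rw [ofFun_add, F.d_add, hf.2, hg.2]⟩

theorem IsPrimitive.sub (hf : F.IsPrimitive α f) (hg : F.IsPrimitive β g) :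
    F.IsPrimitive (α - β) (f - g) :=
  ⟨smoothFun_sub hf.1 hg.1, by rw [ofFun_sub, d_sub, hf.2, hg.2]⟩

theorem IsPrimitive.comp {h : M → M} (hf : F.IsPrimitive α f) (hh : F.SmoothMap h) :
    F.IsPrimitive (F.pull h α) (f ∘ h) :=
  ⟨F.smoothFun_comp hf.1 hh, by
    rw [← pull_ofFun, d_pull_eq hh (F.smoothForm_ofFun hf.1), hf.2]⟩

theorem IsPrimitive.sub_eq_sub (hf : F.IsPrimitive α f) (hg : F.IsPrimitive α g) (x y : M) :
    f y - f x = g y - g x := by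
  have hfg : F.IsPrimitive 0 (f - g) := sub_self α ▸ hf.sub hg
  have := F.apply_eq_of_d_ofFun_eq_zero hfg.1 hfg.2 y x
  simp only [Pi.sub_apply] at this
  linarith

theorem IsExact.sub (hα : F.IsExact α) (hβ : F.IsExact β) : F.IsExact (α - β) :=
  let ⟨_, hf⟩ := hα; let ⟨_, hg⟩ := hβ; ⟨_, hf.sub hg⟩

theorem IsExact.pull {h : M → M} (hα : F.IsExact α) (hh : F.SmoothMap h) :
    F.IsExact (F.pull h α) :=
  let ⟨_, hf⟩ := hα; ⟨_, hf.comp hh⟩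

theorem isExact_of_closed (hH1 : F.H1Trivial) (hα : F.SmoothForm α) (hdα : F.d α = 0) :
    F.IsExact α :=
  let ⟨f, hf, hdf⟩ := hH1 α hα hdα; ⟨f, hf, hdf⟩

theorem isExact_pull_sub_of_isSymplecto (hH1 : F.H1Trivial) {ω : Form M V 2}
    (hα : F.SmoothForm α) (hdα : F.d α = ω) {g : Equiv.Perm M} (hg : F.IsSymplecto ω g) :
    F.IsExact (F.pull g α - α) :=
  isExact_of_closed hH1 (smoothForm_sub (F.smoothForm_pull hg.1 hα) hα) <| by
    rw [d_sub, d_pull_eq hg.1 hα, hdα, hg.2.2, sub_self]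

variable (F) in
/-- `∫_x^y α`, computed from any primitive of `α`; junk value `0` when `α` is not exact. -/
noncomputable def lineIntegral (α : Form M V 1) (x y : M) : ℝ :=
  open Classical in if h : F.IsExact α then h.choose y - h.choose x else 0

theorem IsPrimitive.lineIntegral_eq (hf : F.IsPrimitive α f) (x y : M) :
    F.lineIntegral α x y = f y - f x := by
  have hα : F.IsExact α := ⟨f, hf⟩
  rw [lineIntegral, dif_pos hα]
  exact hα.choose_spec.sub_eq_sub hf x y

variable (F) in
theorem lineIntegral_add_lineIntegral (α : Form M V 1) (x y z : M) :
    F.lineIntegral α x y + F.lineIntegral α y z = F.lineIntegral α x z := by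
  unfold lineIntegral; split_ifs <;> ring

variable (F) in
theorem lineIntegral_self (α : Form M V 1) (x : M) : F.lineIntegral α x x = 0 := by
  unfold lineIntegral; split_ifs <;> ring

theorem lineIntegral_zero (x y : M) : F.lineIntegral 0 x y = 0 := by
  rw [isPrimitive_zero.lineIntegral_eq]; simp

theorem lineIntegral_add (hα : F.IsExact α) (hβ : F.IsExact β) (x y : M) :
    F.lineIntegral (α + β) x y = F.lineIntegral α x y + F.lineIntegral β x y := by
  obtain ⟨f, hf⟩ := hα
  obtain ⟨g, hg⟩ := hβ
  rw [(hf.add hg).lineIntegral_eq, hf.lineIntegral_eq, hg.lineIntegral_eq, Pi.add_apply,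
    Pi.add_apply]
  ring

theorem lineIntegral_sub (hα : F.IsExact α) (hβ : F.IsExact β) (x y : M) :
    F.lineIntegral (α - β) x y = F.lineIntegral α x y - F.lineIntegral β x y := by
  obtain ⟨f, hf⟩ := hα
  obtain ⟨g, hg⟩ := hβ
  rw [(hf.sub hg).lineIntegral_eq, hf.lineIntegral_eq, hg.lineIntegral_eq, Pi.sub_apply,
    Pi.sub_apply]
  ring

theorem lineIntegral_pull {h : M → M} (hα : F.IsExact α) (hh : F.SmoothMap h) (x y : M) :
    F.lineIntegral (F.pull h α) x y = F.lineIntegral α (h x) (h y) := by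
  obtain ⟨f, hf⟩ := hα
  rw [(hf.comp hh).lineIntegral_eq, hf.lineIntegral_eq, Function.comp_apply, Function.comp_apply]

theorem pull_mul_sub {g₁ g₂ : Equiv.Perm M} (h₁ : F.SmoothMap g₁) (h₂ : F.SmoothMap g₂)
    (ω₁ : Form M V 1) :
    F.pull (g₁ * g₂) ω₁ - ω₁ = F.pull g₂ (F.pull g₁ ω₁ - ω₁) + (F.pull g₂ ω₁ - ω₁) := by
  rw [Equiv.Perm.coe_mul, pull_comp h₁ h₂, pull_sub]
  abel

variable (F) in
noncomputable def lineIntegralCocycle (ω₁ : Form M V 1) (x₀ : M) (g₁ g₂ : Equiv.Perm M) : ℝ :=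
  F.lineIntegral (F.pull g₁ ω₁ - ω₁) x₀ (g₂ x₀)

theorem eq_lineIntegralCocycle {S : Set (Equiv.Perm M)} {ω₁ : Form M V 1} {x₀ : M}
    {C : Equiv.Perm M → Equiv.Perm M → ℝ}
    (hC : ∀ g₁ ∈ S, ∀ g₂ ∈ S, ∃ f : M → ℝ, F.SmoothFun f ∧ F.d (ofFun f) = F.pull g₁ ω₁ - ω₁ ∧
      C g₁ g₂ = f (g₂ x₀) - f x₀)
    {g₁ g₂ : Equiv.Perm M} (h₁ : g₁ ∈ S) (h₂ : g₂ ∈ S) :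
    C g₁ g₂ = F.lineIntegralCocycle ω₁ x₀ g₁ g₂ :=
  let ⟨_, hf, hdf, hC⟩ := hC g₁ h₁ g₂ h₂
  hC.trans (IsPrimitive.lineIntegral_eq ⟨hf, hdf⟩ _ _).symm

theorem lineIntegralCocycle_one_left (ω₁ : Form M V 1) (x₀ : M) (g : Equiv.Perm M) :
    F.lineIntegralCocycle ω₁ x₀ 1 g = 0 := by
  rw [lineIntegralCocycle, Equiv.Perm.coe_one, pull_id, sub_self, lineIntegral_zero]

theorem lineIntegralCocycle_one_right (ω₁ : Form M V 1) (x₀ : M) (g : Equiv.Perm M) :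
    F.lineIntegralCocycle ω₁ x₀ g 1 = 0 :=
  F.lineIntegral_self _ x₀

section

variable {ω₁ : Form M V 1} {g₁ g₂ : Equiv.Perm M}

theorem lineIntegral_pull_mul_sub (h₁ : F.SmoothMap g₁) (h₂ : F.SmoothMap g₂)
    (e₁ : F.IsExact (F.pull g₁ ω₁ - ω₁)) (e₂ : F.IsExact (F.pull g₂ ω₁ - ω₁)) (x y : M) :
    F.lineIntegral (F.pull (g₁ * g₂) ω₁ - ω₁) x y =
      F.lineIntegral (F.pull g₁ ω₁ - ω₁) (g₂ x) (g₂ y) +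
        F.lineIntegral (F.pull g₂ ω₁ - ω₁) x y := by
  rw [pull_mul_sub h₁ h₂, lineIntegral_add (e₁.pull h₂) e₂, lineIntegral_pull e₁ h₂]

theorem lineIntegralCocycle_isCocycle (h₁ : F.SmoothMap g₁) (h₂ : F.SmoothMap g₂)
    (e₁ : F.IsExact (F.pull g₁ ω₁ - ω₁)) (e₂ : F.IsExact (F.pull g₂ ω₁ - ω₁))
    (x₀ : M) (g₃ : Equiv.Perm M) :
    F.lineIntegralCocycle ω₁ x₀ g₂ g₃ - F.lineIntegralCocycle ω₁ x₀ (g₁ * g₂) g₃ +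
      F.lineIntegralCocycle ω₁ x₀ g₁ (g₂ * g₃) - F.lineIntegralCocycle ω₁ x₀ g₁ g₂ = 0 := by
  have := F.lineIntegral_add_lineIntegral (F.pull g₁ ω₁ - ω₁) x₀ (g₂ x₀) (g₂ (g₃ x₀))
  simp only [lineIntegralCocycle, lineIntegral_pull_mul_sub h₁ h₂ e₁ e₂, Equiv.Perm.mul_apply]
  linarith

theorem lineIntegralCocycle_sub_lineIntegralCocycle_of_basepoint (h₁ : F.SmoothMap g₁)
    (h₂ : F.SmoothMap g₂) (e₁ : F.IsExact (F.pull g₁ ω₁ - ω₁))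
    (e₂ : F.IsExact (F.pull g₂ ω₁ - ω₁)) (x₀ x₀' : M) :
    F.lineIntegralCocycle ω₁ x₀ g₁ g₂ - F.lineIntegralCocycle ω₁ x₀' g₁ g₂ =
      let a := fun g : Equiv.Perm M => F.lineIntegral (F.pull g ω₁ - ω₁) x₀ x₀'
      a g₂ - a (g₁ * g₂) + a g₁ := by
  have := F.lineIntegral_add_lineIntegral (F.pull g₁ ω₁ - ω₁) x₀ (g₂ x₀) (g₂ x₀')
  have := F.lineIntegral_add_lineIntegral (F.pull g₁ ω₁ - ω₁) x₀ x₀' (g₂ x₀')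
  simp only [lineIntegralCocycle, lineIntegral_pull_mul_sub h₁ h₂ e₁ e₂]
  linarith

end

theorem lineIntegralCocycle_sub_lineIntegralCocycle_of_primitive {ω₁ ω₁' : Form M V 1}
    {g₁ : Equiv.Perm M} (h₁ : F.SmoothMap g₁) (hη : F.IsExact (ω₁ - ω₁'))
    (e₁' : F.IsExact (F.pull g₁ ω₁' - ω₁')) (x₀ : M) (g₂ : Equiv.Perm M) :
    F.lineIntegralCocycle ω₁ x₀ g₁ g₂ - F.lineIntegralCocycle ω₁' x₀ g₁ g₂ =
      let b := fun g : Equiv.Perm M => F.lineIntegral (ω₁ - ω₁') (g x₀) x₀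
      b g₂ - b (g₁ * g₂) + b g₁ := by
  have hθ : F.pull g₁ ω₁ - ω₁ =
      (F.pull g₁ ω₁' - ω₁') + (F.pull g₁ (ω₁ - ω₁') - (ω₁ - ω₁')) := by
    rw [pull_sub]; abel
  have := F.lineIntegral_add_lineIntegral (ω₁ - ω₁') (g₁ x₀) (g₁ (g₂ x₀)) x₀
  have := F.lineIntegral_add_lineIntegral (ω₁ - ω₁') x₀ (g₂ x₀) x₀
  have := F.lineIntegral_self (ω₁ - ω₁') x₀
  simp only [lineIntegralCocycle, hθ, lineIntegral_add e₁' ((hη.pull h₁).sub hη),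
    lineIntegral_sub (hη.pull h₁) hη, lineIntegral_pull hη h₁, Equiv.Perm.mul_apply]
  linarith

end DiffCalc

open DiffCalc in
theorem cocycle_of_lineIntegral_general_two_form_general
    {M V : Type*} [AddCommGroup V] [Module ℝ V]
    (F : DiffCalc M V)
    (ω : Form M V 2)
    (ω₁ : Form M V 1) (hω₁ : F.SmoothForm ω₁) (hdω₁ : F.d ω₁ = ω)
    (hH1 : F.H1Trivial)
    (x₀ : M)
    (C : Equiv.Perm M → Equiv.Perm M → ℝ)
    (hC : ∀ g₁ ∈ {g | F.IsSymplecto ω g}, ∀ g₂ ∈ {g | F.IsSymplecto ω g},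
      ∃ f : M → ℝ, F.SmoothFun f ∧ F.d (ofFun f) = F.pull g₁ ω₁ - ω₁ ∧
        C g₁ g₂ = f (g₂ x₀) - f x₀) :
    -- `C_{x₀}` is a `2`-cocycle:
    (∀ g₁ ∈ {g | F.IsSymplecto ω g}, ∀ g₂ ∈ {g | F.IsSymplecto ω g},
        ∀ g₃ ∈ {g | F.IsSymplecto ω g},
        C g₂ g₃ - C (g₁ * g₂) g₃ + C g₁ (g₂ * g₃) - C g₁ g₂ = 0) ∧
      -- it is normalized:
      (∀ g ∈ {g | F.IsSymplecto ω g}, C 1 g = 0 ∧ C g 1 = 0) ∧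
      -- independence of the base point, up to coboundary:
      (∀ x₀' : M, ∀ C' : Equiv.Perm M → Equiv.Perm M → ℝ,
        (∀ g₁ ∈ {g | F.IsSymplecto ω g}, ∀ g₂ ∈ {g | F.IsSymplecto ω g},
          ∃ f : M → ℝ, F.SmoothFun f ∧ F.d (ofFun f) = F.pull g₁ ω₁ - ω₁ ∧
            C' g₁ g₂ = f (g₂ x₀') - f x₀') →
        ∃ a : Equiv.Perm M → ℝ, ∀ g₁ ∈ {g | F.IsSymplecto ω g}, ∀ g₂ ∈ {g | F.IsSymplecto ω g},
          C g₁ g₂ - C' g₁ g₂ = a g₂ - a (g₁ * g₂) + a g₁) ∧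
      -- independence of the primitive `ω₁`, up to coboundary:
      (∀ ω₁' : Form M V 1, F.SmoothForm ω₁' → F.d ω₁' = ω →
        ∀ C' : Equiv.Perm M → Equiv.Perm M → ℝ,
        (∀ g₁ ∈ {g | F.IsSymplecto ω g}, ∀ g₂ ∈ {g | F.IsSymplecto ω g},
          ∃ f : M → ℝ, F.SmoothFun f ∧ F.d (ofFun f) = F.pull g₁ ω₁' - ω₁' ∧
            C' g₁ g₂ = f (g₂ x₀) - f x₀) →
        ∃ b : Equiv.Perm M → ℝ, ∀ g₁ ∈ {g | F.IsSymplecto ω g}, ∀ g₂ ∈ {g | F.IsSymplecto ω g},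
          C g₁ g₂ - C' g₁ g₂ = b g₂ - b (g₁ * g₂) + b g₁) := by
  have e := fun g (hg : F.IsSymplecto ω g) => isExact_pull_sub_of_isSymplecto hH1 hω₁ hdω₁ hg
  have one := isSymplecto_one (F := F) ω
  refine ⟨fun g₁ h₁ g₂ h₂ g₃ h₃ => ?_, fun g hg => ?_, fun x₀' C' hC' => ?_,
    fun ω₁' hω₁' hdω₁' C' hC' => ?_⟩
  · rw [eq_lineIntegralCocycle hC h₂ h₃, eq_lineIntegralCocycle hC (h₁.mul h₂) h₃,
      eq_lineIntegralCocycle hC h₁ (h₂.mul h₃), eq_lineIntegralCocycle hC h₁ h₂]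
    exact lineIntegralCocycle_isCocycle h₁.1 h₂.1 (e g₁ h₁) (e g₂ h₂) x₀ g₃
  · rw [eq_lineIntegralCocycle hC one hg, eq_lineIntegralCocycle hC hg one]
    exact ⟨lineIntegralCocycle_one_left ω₁ x₀ g, lineIntegralCocycle_one_right ω₁ x₀ g⟩
  · refine ⟨fun g => F.lineIntegral (F.pull g ω₁ - ω₁) x₀ x₀', fun g₁ h₁ g₂ h₂ => ?_⟩
    rw [eq_lineIntegralCocycle hC h₁ h₂, eq_lineIntegralCocycle hC' h₁ h₂]
    exact lineIntegralCocycle_sub_lineIntegralCocycle_of_basepoint h₁.1 h₂.1 (e g₁ h₁)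
      (e g₂ h₂) x₀ x₀'
  · have hη : F.IsExact (ω₁ - ω₁') := isExact_of_closed hH1 (smoothForm_sub hω₁ hω₁')
      (by rw [d_sub, hdω₁, hdω₁', sub_self])
    refine ⟨fun g => F.lineIntegral (ω₁ - ω₁') (g x₀) x₀, fun g₁ h₁ g₂ h₂ => ?_⟩
    rw [eq_lineIntegralCocycle hC h₁ h₂, eq_lineIntegralCocycle hC' h₁ h₂]
    exact lineIntegralCocycle_sub_lineIntegralCocycle_of_primitive h₁.1 hη
      (isExact_pull_sub_of_isSymplecto hH1 hω₁' hdω₁' h₁) x₀ g₂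

/-- Let `M` be a (connected) smooth manifold with `H¹(M,ℝ) = 0`, let `ω` be
an exact `2`-form on `M` (not necessarily nondegenerate), and let `Diff(M,ω)` be the group of
diffeomorphisms of `M` preserving `ω`.  Fix a primitive `ω₁` (`dω₁ = ω`) and `x₀ ∈ M`.  Then
`C_{x₀}(g₁,g₂) = ∫_{x₀}^{g₂x₀}(g₁*ω₁ − ω₁)` is a normalized `2`-cocycle on `Diff(M,ω)` with
values in the trivial module `ℝ`, and its cohomology class is independent of the choice of
`x₀` and of `ω₁` (the differences are coboundaries of `1`-cochains).  Line integrals of the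
exact forms `g₁*ω₁ − ω₁` are expressed via primitives (path independence). -/
theorem cocycle_of_lineIntegral_general_two_form
    {M V : Type*} [AddCommGroup V] [Module ℝ V]
    (F : DiffCalc M V)
    (ω : Form M V 2) (hω : F.SmoothForm ω)
    (ω₁ : Form M V 1) (hω₁ : F.SmoothForm ω₁) (hdω₁ : F.d ω₁ = ω)
    (hH1 : F.H1Trivial)
    (x₀ : M)
    (C : Equiv.Perm M → Equiv.Perm M → ℝ)
    (hC : ∀ g₁ ∈ {g | F.IsSymplecto ω g}, ∀ g₂ ∈ {g | F.IsSymplecto ω g},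
      ∃ f : M → ℝ, F.SmoothFun f ∧ F.d (ofFun f) = F.pull g₁ ω₁ - ω₁ ∧
        C g₁ g₂ = f (g₂ x₀) - f x₀) :
    -- `C_{x₀}` is a `2`-cocycle:
    (∀ g₁ ∈ {g | F.IsSymplecto ω g}, ∀ g₂ ∈ {g | F.IsSymplecto ω g},
        ∀ g₃ ∈ {g | F.IsSymplecto ω g},
        C g₂ g₃ - C (g₁ * g₂) g₃ + C g₁ (g₂ * g₃) - C g₁ g₂ = 0) ∧
      -- it is normalized:
      (∀ g ∈ {g | F.IsSymplecto ω g}, C 1 g = 0 ∧ C g 1 = 0) ∧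
      -- independence of the base point, up to coboundary:
      (∀ x₀' : M, ∀ C' : Equiv.Perm M → Equiv.Perm M → ℝ,
        (∀ g₁ ∈ {g | F.IsSymplecto ω g}, ∀ g₂ ∈ {g | F.IsSymplecto ω g},
          ∃ f : M → ℝ, F.SmoothFun f ∧ F.d (ofFun f) = F.pull g₁ ω₁ - ω₁ ∧
            C' g₁ g₂ = f (g₂ x₀') - f x₀') →
        ∃ a : Equiv.Perm M → ℝ, ∀ g₁ ∈ {g | F.IsSymplecto ω g}, ∀ g₂ ∈ {g | F.IsSymplecto ω g},
          C g₁ g₂ - C' g₁ g₂ = a g₂ - a (g₁ * g₂) + a g₁) ∧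
      -- independence of the primitive `ω₁`, up to coboundary:
      (∀ ω₁' : Form M V 1, F.SmoothForm ω₁' → F.d ω₁' = ω →
        ∀ C' : Equiv.Perm M → Equiv.Perm M → ℝ,
        (∀ g₁ ∈ {g | F.IsSymplecto ω g}, ∀ g₂ ∈ {g | F.IsSymplecto ω g},
          ∃ f : M → ℝ, F.SmoothFun f ∧ F.d (ofFun f) = F.pull g₁ ω₁' - ω₁' ∧
            C' g₁ g₂ = f (g₂ x₀) - f x₀) →
        ∃ b : Equiv.Perm M → ℝ, ∀ g₁ ∈ {g | F.IsSymplecto ω g}, ∀ g₂ ∈ {g | F.IsSymplecto ω g},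
          C g₁ g₂ - C' g₁ g₂ = b g₂ - b (g₁ * g₂) + b g₁) :=
  cocycle_of_lineIntegral_general_two_form_general F ω ω₁ hω₁ hdω₁ hH1 x₀ C hC

end SymplCocycle
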